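/- arXiv:1707.01711 — 2 statements merged into one kernel-verified Lean document; each statement's English description precedes it below -/
import Mathlib

section
/- Let φ : ℝ → ℝ be a nonnegative, monotonically non-increasing, convex, differentiable function and set ϕ := −φ′. Fix data points x_1,…,x_n ∈ ℝ^D, bandwidths σ_1,…,σ_D > 0, and nonnegative coefficients β_j^{(i)} ≥ 0 (1 ≤ i ≤ n, 1 ≤ j ≤ D). Define the estimated log-density gradient components ĝ_j(x) := Σ_{i=1}^n β_j^{(i)} ((x_i^{(j)} − x^{(j)})/σ_j^2) ϕ(‖x − x_i‖^2/(2σ_j^2)). Given a current point z^τ ∈ ℝ^D, define the coordinate-wise update z^{τ+1}: for j = 1,…,D, z^{(τ+1,j)} := [ Σ_i β_j^{(i)} x_i^{(j)} ϕ(‖z̃_j − x_i‖^2/(2σ_j^2)) ] / [ Σ_i β_j^{(i)} ϕ(‖z̃_j − x_i‖^2/(2σ_j^2)) ], where z̃_j := (z^{(τ+1,1)},…,z^{(τ+1,j−1)}, z^{(τ,j)}, z^{(τ,j+1)},…,z^{(τ,D)}) and each denominator is assumed nonzero. Then the coordinate-path integral satisfies D̂_ĝ[z^{τ+1} | z^τ]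 := Σ_{j=1}^D ∫_{z^{(τ,j)}}^{z^{(τ+1,j)}} ĝ_j(z^{(τ+1,1)},…,z^{(τ+1,j−1)}, t, z^{(τ,j+1)},…,z^{(τ,D)}) dt ≥ 0. -/
/-! With `F_j(x) := Σ_i β_j^{(i)} φ(‖x − x_i‖²/(2σ_j²))` we have `ĝ_j = ∂_j F_j`, so the `j`-th
integral is the increase of `F_j` along the `j`-th leg of the coordinate path. Summing the tangent
lines of the convex `φ` at the points `‖z̃_j − x_i‖²/(2σ_j²)` bounds `F_j`, as a function of the
`j`-th coordinate `t` alone, from below by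
`F_j(z̃_j) + (Σ_i w_i (z^{(τ,j)} − x_i^{(j)})² − Σ_i w_i (t − x_i^{(j)})²)/(2σ_j²)`
with weights `w_i = β_j^{(i)} ϕ(‖z̃_j − x_i‖²/(2σ_j²)) ≥ 0`. The update `z^{(τ+1,j)}` is the
`w`-weighted mean of the `x_i^{(j)}`, which minimizes `Σ_i w_i (t − x_i^{(j)})²`; hence `F_j`
does not decrease. -/

open MeasureTheory

namespace Stmt1

/-- The point `(x^{(1)},…,x^{(j−1)}, t, y^{(j+1)},…,y^{(D)})` on the coordinate-wise
path from `y` to `x`. -/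
noncomputable def pathSeg {D : ℕ} (x y : Fin D → ℝ) (j : Fin D) (t : ℝ) : Fin D → ℝ :=
  fun i => if i < j then x i else if i = j then t else y i

/-- Squared Euclidean distance `‖z − c‖²` on `ℝ^D`. -/
noncomputable def sqDist {D : ℕ} (z c : Fin D → ℝ) : ℝ := ∑ k, (z k - c k) ^ 2

/-- The estimated log-density gradient component
`ĝ_j(x) := Σ_i β_j^{(i)} ((x_i^{(j)} − x^{(j)})/σ_j²) ϕ(‖x − x_i‖²/(2σ_j²))`
with `ϕ = −φ′`. -/
noncomputable def ghat {D n : ℕ} (φ : ℝ → ℝ) (xdata : Fin n → Fin D → ℝ)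
    (σ : Fin D → ℝ) (β : Fin n → Fin D → ℝ) (j : Fin D) (x : Fin D → ℝ) : ℝ :=
  ∑ i, β i j * ((xdata i j - x j) / (σ j) ^ 2)
    * (-(deriv φ (sqDist x (xdata i) / (2 * (σ j) ^ 2))))

section PathSeg

variable {D : ℕ} (x y c : Fin D → ℝ) (j : Fin D)

lemma pathSeg_self (t : ℝ) : pathSeg x y j t j = t := by
  simp [pathSeg]

lemma sqDist_pathSeg (t : ℝ) :
    sqDist (pathSeg x y j t) c = (t - c j) ^ 2 + sqDist (pathSeg x y j (c j)) c := by
  have hterm : ∀ k, (pathSeg x y j t k - c k) ^ 2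
      = (if k = j then (t - c j) ^ 2 else 0) + (pathSeg x y j (c j) k - c k) ^ 2 := by
    intro k
    by_cases hk : k = j
    · subst hk; simp [pathSeg]
    · simp [pathSeg, hk]
  simp only [sqDist, hterm, Finset.sum_add_distrib, Finset.sum_ite_eq', Finset.mem_univ, if_true]

lemma hasDerivAt_sqDist_pathSeg (t : ℝ) :
    HasDerivAt (fun s => sqDist (pathSeg x y j s) c) (2 * (t - c j)) t := by
  rw [funext (sqDist_pathSeg x y c j)]
  simpa using (((hasDerivAt_id t).sub_const (c j)).pow 2).add_const
    (sqDist (pathSeg x y j (c j)) c)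

end PathSeg

end Stmt1

lemma ConvexOn.add_deriv_mul_sub_le {S : Set ℝ} {f : ℝ → ℝ} {x y : ℝ} (hf : ConvexOn ℝ S f)
    (hx : x ∈ S) (hy : y ∈ S) (hfx : DifferentiableAt ℝ f x) :
    f x + deriv f x * (y - x) ≤ f y := by
  rcases lt_trichotomy x y with hxy | rfl | hyx
  · have h := hf.deriv_le_slope hx hy hxy hfx
    rw [slope_def_field, le_div_iff₀ (sub_pos.mpr hxy)] at h
    linarith
  · simp
  · have h := hf.slope_le_deriv hy hx hyx hfx
    rw [slope_def_field, div_le_iff₀ (sub_pos.mpr hyx)] at h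
    linarith

lemma Monotone.intervalIntegrable_comp {f g : ℝ → ℝ} (hf : Monotone f) (hg : Continuous g)
    (a b : ℝ) : IntervalIntegrable (f ∘ g) volume a b := by
  obtain ⟨xmin, -, hmin⟩ := isCompact_uIcc.exists_isMinOn Set.nonempty_uIcc hg.continuousOn
  obtain ⟨xmax, -, hmax⟩ := isCompact_uIcc.exists_isMaxOn Set.nonempty_uIcc hg.continuousOn
  refine (intervalIntegrable_const (c := max |f (g xmin)| |f (g xmax)|)).mono_fun'
    (hf.measurable.comp hg.measurable).aestronglyMeasurable ?_
  refine ae_restrict_of_forall_mem measurableSet_uIoc fun x hx => ?_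
  have hx' := Set.uIoc_subset_uIcc hx
  exact abs_le_max_abs_abs (hf (hmin hx')) (hf (hmax hx'))

section WeightedMean

variable {ι : Type*} (s : Finset ι) (w a : ι → ℝ)

lemma sum_mul_sq_sub_eq_add (hS : ∑ i ∈ s, w i ≠ 0) (t : ℝ) :
    ∑ i ∈ s, w i * (t - a i) ^ 2
      = ∑ i ∈ s, w i * ((∑ i ∈ s, w i * a i) / ∑ i ∈ s, w i - a i) ^ 2
        + (∑ i ∈ s, w i) * (t - (∑ i ∈ s, w i * a i) / ∑ i ∈ s, w i) ^ 2 := by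
  have hexpand : ∀ u : ℝ, ∑ i ∈ s, w i * (u - a i) ^ 2
      = (∑ i ∈ s, w i) * u ^ 2 - 2 * (∑ i ∈ s, w i * a i) * u + ∑ i ∈ s, w i * a i ^ 2 := by
    intro u
    simp only [Finset.sum_mul, Finset.mul_sum, ← Finset.sum_sub_distrib,
      ← Finset.sum_add_distrib]
    exact Finset.sum_congr rfl fun i _ => by ring
  rw [hexpand, hexpand]
  field_simp
  ring

lemma sum_mul_sq_sub_weightedMean_le (hw : ∀ i ∈ s, 0 ≤ w i) (hS : ∑ i ∈ s, w i ≠ 0)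
    (t : ℝ) :
    ∑ i ∈ s, w i * ((∑ i ∈ s, w i * a i) / ∑ i ∈ s, w i - a i) ^ 2
      ≤ ∑ i ∈ s, w i * (t - a i) ^ 2 := by
  rw [sum_mul_sq_sub_eq_add s w a hS t, le_add_iff_nonneg_right]
  exact mul_nonneg (Finset.sum_nonneg hw) (sq_nonneg _)

end WeightedMean

namespace Stmt1

noncomputable def ghatPotential {D n : ℕ} (φ : ℝ → ℝ) (xdata : Fin n → Fin D → ℝ)
    (σ : Fin D → ℝ) (β : Fin n → Fin D → ℝ) (j : Fin D) (x : Fin D → ℝ) : ℝ :=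
  ∑ i, β i j * φ (sqDist x (xdata i) / (2 * (σ j) ^ 2))

section Potential

variable {D n : ℕ} {φ : ℝ → ℝ} (xdata : Fin n → Fin D → ℝ) (σ : Fin D → ℝ)
  (β : Fin n → Fin D → ℝ) (x y : Fin D → ℝ) (j : Fin D)

lemma hasDerivAt_ghatPotential_pathSeg (hφ : Differentiable ℝ φ) (t : ℝ) :
    HasDerivAt (fun s => ghatPotential φ xdata σ β j (pathSeg x y j s))
      (ghat φ xdata σ β j (pathSeg x y j t)) t := by
  refine HasDerivAt.fun_sum fun i _ => ?_
  have h := ((hφ _).hasDerivAt.comp t ((hasDerivAt_sqDist_pathSeg x y (xdata i) j t).div_const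
    (2 * σ j ^ 2))).const_mul (β i j)
  exact h.congr_deriv (by rw [pathSeg_self]; ring)

lemma intervalIntegrable_ghat_pathSeg (hφ' : Monotone (deriv φ)) (a b : ℝ) :
    IntervalIntegrable (fun t => ghat φ xdata σ β j (pathSeg x y j t)) volume a b := by
  have hterm : ∀ i, IntervalIntegrable (fun t => β i j * ((xdata i j - pathSeg x y j t j) /
      σ j ^ 2) * -deriv φ (sqDist (pathSeg x y j t) (xdata i) / (2 * σ j ^ 2))) volume a b := by
    intro i
    have hu : Continuous fun t => sqDist (pathSeg x y j t) (xdata i) / (2 * σ j ^ 2) :=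
      (continuous_iff_continuousAt.2 fun t =>
        (hasDerivAt_sqDist_pathSeg x y (xdata i) j t).continuousAt).div_const _
    simp only [pathSeg_self]
    exact (hφ'.intervalIntegrable_comp hu a b).neg.continuousOn_mul (by fun_prop)
  simpa only [ghat, Finset.sum_fn] using IntervalIntegrable.sum Finset.univ fun i _ => hterm i

lemma integral_ghat_pathSeg (hφ : Differentiable ℝ φ) (hφ' : Monotone (deriv φ)) (a b : ℝ) :
    ∫ t in a..b, ghat φ xdata σ β j (pathSeg x y j t)
      = ghatPotential φ xdata σ β j (pathSeg x y j b)
        - ghatPotential φ xdata σ β j (pathSeg x y j a) :=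
  intervalIntegral.integral_eq_sub_of_hasDerivAt
    (fun t _ => hasDerivAt_ghatPotential_pathSeg xdata σ β x y j hφ t)
    (intervalIntegrable_ghat_pathSeg xdata σ β x y j hφ' a b)

end Potential

lemma ghatPotential_pathSeg_le_update {D n : ℕ} {φ : ℝ → ℝ} (hconv : ConvexOn ℝ Set.univ φ)
    (hdiff : Differentiable ℝ φ) (hmono : Antitone φ) (xdata : Fin n → Fin D → ℝ)
    (σ : Fin D → ℝ) (β : Fin n → Fin D → ℝ) (x y : Fin D → ℝ) (j : Fin D)
    (hβ : ∀ i, 0 ≤ β i j) (t : ℝ)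
    (hden : (∑ i, β i j * (-(deriv φ
      (sqDist (pathSeg x y j t) (xdata i) / (2 * (σ j) ^ 2))))) ≠ 0) :
    ghatPotential φ xdata σ β j (pathSeg x y j t)
      ≤ ghatPotential φ xdata σ β j (pathSeg x y j
        ((∑ i, β i j * xdata i j * (-(deriv φ
            (sqDist (pathSeg x y j t) (xdata i) / (2 * (σ j) ^ 2)))))
          / (∑ i, β i j * (-(deriv φ
            (sqDist (pathSeg x y j t) (xdata i) / (2 * (σ j) ^ 2))))))) := by
  set u : ℝ → Fin n → ℝ := fun s i => sqDist (pathSeg x y j s) (xdata i) / (2 * (σ j) ^ 2)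
  set w : Fin n → ℝ := fun i => β i j * -deriv φ (u t i)
  set a : Fin n → ℝ := fun i => xdata i j
  set m := (∑ i, β i j * xdata i j * -deriv φ (u t i)) / ∑ i, w i
  have hnum : ∑ i, β i j * xdata i j * -deriv φ (u t i) = ∑ i, w i * a i :=
    Finset.sum_congr rfl fun i _ => by simp only [w, a]; ring
  have hm : m = (∑ i, w i * a i) / ∑ i, w i := by rw [← hnum]
  have hw : ∀ i ∈ Finset.univ, 0 ≤ w i := fun i _ =>
    mul_nonneg (hβ i) (neg_nonneg.2 hmono.deriv_nonpos)
  have hshift : ∀ i, u m i - u t i = ((m - a i) ^ 2 - (t - a i) ^ 2) / (2 * (σ j) ^ 2) := by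
    intro i
    simp only [u, a, sqDist_pathSeg x y (xdata i) j m, sqDist_pathSeg x y (xdata i) j t]
    ring
  have htangent : ∑ i, β i j * φ (u t i) + ∑ i, β i j * (deriv φ (u t i) * (u m i - u t i))
      ≤ ∑ i, β i j * φ (u m i) := by
    rw [← Finset.sum_add_distrib]
    refine Finset.sum_le_sum fun i _ => ?_
    rw [← mul_add]
    exact mul_le_mul_of_nonneg_left
      (hconv.add_deriv_mul_sub_le trivial trivial (hdiff _)) (hβ i)
  have hgain : ∑ i, β i j * (deriv φ (u t i) * (u m i - u t i))
      = (∑ i, w i * (t - a i) ^ 2 - ∑ i, w i * (m - a i) ^ 2) / (2 * (σ j) ^ 2) := by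
    simp only [hshift, ← Finset.sum_sub_distrib, Finset.sum_div]
    exact Finset.sum_congr rfl fun i _ => by ring
  have hmin : ∑ i, w i * (m - a i) ^ 2 ≤ ∑ i, w i * (t - a i) ^ 2 :=
    hm ▸ sum_mul_sq_sub_weightedMean_le Finset.univ w a hw hden t
  have hgain_nonneg : 0 ≤ ∑ i, β i j * (deriv φ (u t i) * (u m i - u t i)) := by
    rw [hgain]
    exact div_nonneg (sub_nonneg.2 hmin) (by positivity)
  exact le_of_add_le_of_nonneg_left htangent hgain_nonneg

theorem stmt_1_general
    {D n : ℕ} (φ : ℝ → ℝ)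
    (hmono : Antitone φ)
    (hconv : ConvexOn ℝ Set.univ φ) (hdiff : Differentiable ℝ φ)
    (xdata : Fin n → Fin D → ℝ) (σ : Fin D → ℝ)
    (β : Fin n → Fin D → ℝ) (hβ : ∀ i j, 0 ≤ β i j)
    (zold znew : Fin D → ℝ)
    (hden : ∀ j : Fin D,
      (∑ i, β i j * (-(deriv φ
          (sqDist (pathSeg znew zold j (zold j)) (xdata i) / (2 * (σ j) ^ 2))))) ≠ 0)
    (hupdate : ∀ j : Fin D,
      znew j =
        (∑ i, β i j * xdata i j * (-(deriv φ
            (sqDist (pathSeg znew zold j (zold j)) (xdata i) / (2 * (σ j) ^ 2)))))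
        / (∑ i, β i j * (-(deriv φ
            (sqDist (pathSeg znew zold j (zold j)) (xdata i) / (2 * (σ j) ^ 2)))))) :
    0 ≤ ∑ j : Fin D, ∫ t in (zold j)..(znew j),
          ghat φ xdata σ β j (pathSeg znew zold j t) := by
  have hderiv_mono : Monotone (deriv φ) :=
    monotoneOn_univ.1 (hconv.monotoneOn_deriv fun x _ => hdiff x)
  refine Finset.sum_nonneg fun j _ => ?_
  rw [integral_ghat_pathSeg xdata σ β znew zold j hdiff hderiv_mono, sub_nonneg]
  conv_rhs => rw [hupdate j]
  exact ghatPotential_pathSeg_le_update hconv hdiff hmono xdata σ β znew zold j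
    (fun i => hβ i j) (zold j) (hden j)

/-- Let `φ : ℝ → ℝ` be nonnegative, monotonically non-increasing, convex
and differentiable, with `ϕ := −φ′`.  Fix data `x_1,…,x_n ∈ ℝ^D`, bandwidths `σ_j > 0`, and
nonnegative coefficients `β_j^{(i)} ≥ 0`.  Given a current point `z^τ`, let `z^{τ+1}` be the
coordinate-wise update: for each `j`,
`z^{(τ+1,j)} = [Σ_i β_j^{(i)} x_i^{(j)} ϕ(‖z̃_j − x_i‖²/(2σ_j²))] /
               [Σ_i β_j^{(i)} ϕ(‖z̃_j − x_i‖²/(2σ_j²))]`,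
where `z̃_j = (z^{(τ+1,1)},…,z^{(τ+1,j−1)}, z^{(τ,j)},…,z^{(τ,D)})` and each denominator
is nonzero.  Then the coordinate-path integral
`D̂_ĝ[z^{τ+1}|z^τ] = Σ_j ∫_{z^{(τ,j)}}^{z^{(τ+1,j)}} ĝ_j(z^{(τ+1,1)},…,t,…,z^{(τ,D)}) dt`
is nonnegative. -/
theorem stmt_1
    {D n : ℕ} (φ : ℝ → ℝ)
    (hnonneg : ∀ t : ℝ, 0 ≤ φ t) (hmono : Antitone φ)
    (hconv : ConvexOn ℝ Set.univ φ) (hdiff : Differentiable ℝ φ)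
    (xdata : Fin n → Fin D → ℝ) (σ : Fin D → ℝ) (hσ : ∀ j, 0 < σ j)
    (β : Fin n → Fin D → ℝ) (hβ : ∀ i j, 0 ≤ β i j)
    (zold znew : Fin D → ℝ)
    (hden : ∀ j : Fin D,
      (∑ i, β i j * (-(deriv φ
          (sqDist (pathSeg znew zold j (zold j)) (xdata i) / (2 * (σ j) ^ 2))))) ≠ 0)
    (hupdate : ∀ j : Fin D,
      znew j =
        (∑ i, β i j * xdata i j * (-(deriv φ
            (sqDist (pathSeg znew zold j (zold j)) (xdata i) / (2 * (σ j) ^ 2)))))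
        / (∑ i, β i j * (-(deriv φ
            (sqDist (pathSeg znew zold j (zold j)) (xdata i) / (2 * (σ j) ^ 2)))))) :
    0 ≤ ∑ j : Fin D, ∫ t in (zold j)..(znew j),
          ghat φ xdata σ β j (pathSeg znew zold j t) :=
  stmt_1_general φ hmono hconv hdiff xdata σ β hβ zold znew hden hupdate

end Stmt1
end

section
/- Let H be a separable reproducing kernel Hilbert space of real-valued functions on X ⊆ ℝ^D with kernel k, p a probability density on X with ∫_X ‖k(·,x)‖_H^2 p(x) dx < ∞ and ∫_X ‖∂_j k(·,x)‖_H p(x) dx < ∞, and suppose r*_j := ∂_j p / p ∈ H. Assume the integration-by-parts identity ∫_X k(·,x) ∂_j p(x) dx = (−1)^{|j|} ∫_X ∂_j k(·,x) p(x) dx (Bochner integrals in H). Then the covariance operator C := ∫_X k(·,x) ⊗ k(·,x) p(x) dx satisfies C r*_j = ξ_j, where ξ_j := (−1)^{|j|} ∫_X ∂_j k(·,x) p(x) dx. -/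
/-!
Where `p x ≠ 0`, the hypothesis on `r*` gives `p x • (k(·,x) ⊗ k(·,x)) r* = ∂_j p x • k(·,x)`, so
`C r*` is the left side of the integration-by-parts identity as soon as `∂_j p` vanishes almost
everywhere on `{p = 0}`. That holds for any function and any multi-index: a function vanishing on
a set `s` has zero derivative at every Lebesgue density point of `s` where it is differentiable,
because every direction is tangent to `s` there.
-/

open MeasureTheory

namespace Stmt9

variable {H : Type*} [NormedAddCommGroup H] [InnerProductSpace ℝ H] [CompleteSpace H]

/-- The rank-one operator `f ⊗ g : h ↦ ⟪g, h⟫ f`. -/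
noncomputable def rankOne (f g : H) : H →L[ℝ] H := (innerSL ℝ g).smulRight f

/-- Partial derivative in the `j`-th coordinate of a vector-valued map on `ℝ^D`. -/
noncomputable def coordDeriv {D : ℕ} {E : Type*} [NormedAddCommGroup E] [NormedSpace ℝ E]
    (j : Fin D) (F : (Fin D → ℝ) → E) : (Fin D → ℝ) → E :=
  fun x => fderiv ℝ F x (Pi.single j 1)

/-- Multi-index partial derivative `∂_j` for the multi-index given by a list of
coordinates (`|j|` is the length of the list). -/
noncomputable def multiDeriv {D : ℕ} {E : Type*} [NormedAddCommGroup E] [NormedSpace ℝ E]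
    (js : List (Fin D)) (F : (Fin D → ℝ) → E) : (Fin D → ℝ) → E :=
  js.foldr coordDeriv F

section DensityPoints

open Set Filter Metric Topology Pointwise

variable {E F : Type*} [NormedAddCommGroup E] [NormedSpace ℝ E] [FiniteDimensional ℝ E]
  [MeasurableSpace E] [BorelSpace E] (μ : Measure E) [μ.IsAddHaarMeasure]
  [NormedAddCommGroup F] [NormedSpace ℝ F]

/-- Since `s` has density one at `x`, for small `r > 0` the set `x + r • ball z ε` meets `s`. -/
lemma tangentConeAt_eq_univ_of_tendsto_density {s : Set E} {x : E}
    (hx : Tendsto (fun r => μ (s ∩ closedBall x r) / μ (closedBall x r)) (𝓝[>] 0) (𝓝 1)) :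
    tangentConeAt ℝ s x = univ := by
  refine eq_univ_of_forall fun z => ?_
  simp only [tangentConeAt_eq_biInter_closure, mem_iInter₂, Metric.mem_closure_iff]
  intro U hU ε hε
  have hmeets : ∀ᶠ r in 𝓝[>] (0 : ℝ), (s ∩ ({x} + r • ball z ε)).Nonempty :=
    Measure.eventually_nonempty_inter_smul_of_density_one μ s x hx _ measurableSet_ball
      (measure_ball_pos μ z hε).ne'
  have hsmall : ∀ᶠ r in 𝓝[>] (0 : ℝ), {(0 : E)} + r • ball z ε ⊆ U :=
    nhdsWithin_le_nhds (eventually_singleton_add_smul_subset isBounded_ball hU)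
  obtain ⟨r, ⟨y, hys, hy⟩, hrU, hr⟩ :=
    (hmeets.and (hsmall.and self_mem_nhdsWithin)).exists
  obtain ⟨a, ha, hay⟩ : ∃ a ∈ ball z ε, r • a = -x + y := by
    simpa only [singleton_add, image_add_left, mem_preimage, mem_smul_set] using hy
  obtain rfl : y = x + r • a := by rw [hay, add_neg_cancel_left]
  refine ⟨a, ⟨r⁻¹, mem_univ _, r • a, ⟨hrU ?_, hys⟩, inv_smul_smul₀ hr.ne' a⟩, ?_⟩
  · simpa only [zero_add, singleton_add, image_id'] using smul_mem_smul_set ha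
  · rw [dist_comm]; exact ha

lemma ae_fderiv_eq_zero_of_eqOn_zero {f : E → F} {s : Set E} (hf : EqOn f 0 s) :
    ∀ᵐ x ∂μ, x ∈ s → fderiv ℝ f x = 0 := by
  filter_upwards [ae_imp_of_ae_restrict (Besicovitch.ae_tendsto_measure_inter_div μ s)]
    with x hx hxs
  by_cases hd : DifferentiableAt ℝ f x
  · have hs : UniqueDiffWithinAt ℝ s x :=
      ⟨by simp [tangentConeAt_eq_univ_of_tendsto_density μ (hx hxs)], subset_closure hxs⟩
    exact hs.eq hd.hasFDerivAt.hasFDerivWithinAt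
      ((hasFDerivWithinAt_const 0 x s).congr hf (hf hxs))
  · exact fderiv_zero_of_not_differentiableAt hd

end DensityPoints

lemma ae_multiDeriv_eq_zero_of_eqOn_zero {D : ℕ} {F : Type*} [NormedAddCommGroup F]
    [NormedSpace ℝ F] (μ : Measure (Fin D → ℝ)) [μ.IsAddHaarMeasure] {f : (Fin D → ℝ) → F}
    {s : Set (Fin D → ℝ)} (hf : Set.EqOn f 0 s) (js : List (Fin D)) :
    ∀ᵐ x ∂μ, x ∈ s → multiDeriv js f x = 0 := by
  induction js with
  | nil => exact .of_forall hf
  | cons j js ih =>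
    have hvanish := ae_fderiv_eq_zero_of_eqOn_zero μ
      (s := {x | x ∈ s ∧ multiDeriv js f x = 0}) fun _ hx => hx.2
    filter_upwards [ih, hvanish] with x hx hdx hxs
    change fderiv ℝ (multiDeriv js f) x (Pi.single j 1) = 0
    rw [hdx ⟨hxs, hx hxs⟩, zero_apply]

lemma smul_rankOne_self_apply_of_inner_eq_div {V : Type*} [NormedAddCommGroup V]
    [InnerProductSpace ℝ V] {f r : V} {a b : ℝ}
    (hr : inner ℝ r f = b / a) (hb : a = 0 → b = 0) : (a • rankOne f f) r = b • f := by
  rw [smul_apply, rankOne, ContinuousLinearMap.smulRight_apply,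
    innerSL_apply_apply, real_inner_comm, hr, smul_smul]
  rcases eq_or_ne a 0 with rfl | ha
  · simp [hb rfl]
  · rw [mul_div_cancel₀ _ ha]

theorem stmt_9_general
    {D : ℕ} (X : Set (Fin D → ℝ)) (hX : MeasurableSet X)
    (K : (Fin D → ℝ) → H) (p : (Fin D → ℝ) → ℝ)
    (js : List (Fin D))
    (rstar : H)
    (hrepr : ∀ x ∈ X, (inner ℝ rstar (K x) : ℝ) = multiDeriv js p x / p x)
    (hCint : Integrable (fun x => p x • rankOne (K x) (K x)) (volume.restrict X))
    (hibp : ∫ x in X, (multiDeriv js p x) • K x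
        = ((-1 : ℝ) ^ js.length) • ∫ x in X, p x • multiDeriv js K x) :
    (∫ x in X, p x • rankOne (K x) (K x)) rstar
      = ((-1 : ℝ) ^ js.length) • ∫ x in X, p x • multiDeriv js K x := by
  have hdp : ∀ᵐ x, x ∈ {x | x ∈ X ∧ p x = 0} → multiDeriv js p x = 0 :=
    ae_multiDeriv_eq_zero_of_eqOn_zero volume (fun _ hx => hx.2) js
  rw [← hibp, ContinuousLinearMap.integral_apply hCint]
  refine integral_congr_ae ?_
  filter_upwards [ae_restrict_of_ae hdp, ae_restrict_mem hX] with x hx hxX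
  exact smul_rankOne_self_apply_of_inner_eq_div (hrepr x hxX) fun h => hx ⟨hxX, h⟩

/-- Let `H` be a separable RKHS of real-valued functions on `X ⊆ ℝ^D` with
kernel `k` (feature map `K`, reproducing property `f(x) = ⟪f, K x⟫`), `p` a probability
density on `X` with `∫_X ‖k(·,x)‖²_H p(x) dx < ∞` and `∫_X ‖∂_j k(·,x)‖_H p(x) dx < ∞`, and
suppose `r*_j := ∂_j p / p ∈ H`.  Assume the integration-by-parts identity
`∫_X k(·,x) ∂_j p(x) dx = (−1)^{|j|} ∫_X ∂_j k(·,x) p(x) dx` (Bochner integrals in `H`).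
Then the covariance operator `C := ∫_X k(·,x) ⊗ k(·,x) p(x) dx` satisfies `C r*_j = ξ_j`
where `ξ_j := (−1)^{|j|} ∫_X ∂_j k(·,x) p(x) dx`. -/
theorem stmt_9
    [TopologicalSpace.SeparableSpace H]
    {D : ℕ} (X : Set (Fin D → ℝ)) (hX : MeasurableSet X)
    (K : (Fin D → ℝ) → H) (p : (Fin D → ℝ) → ℝ)
    (hp_nonneg : ∀ x ∈ X, 0 ≤ p x)
    (hp_prob : ∫ x in X, p x = 1)
    (js : List (Fin D))
    (rstar : H)
    (hrepr : ∀ x ∈ X, (inner ℝ rstar (K x) : ℝ) = multiDeriv js p x / p x)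
    (hK2 : Integrable (fun x => p x * ‖K x‖ ^ 2) (volume.restrict X))
    (hDK1 : Integrable (fun x => p x * ‖multiDeriv js K x‖) (volume.restrict X))
    (hCint : Integrable (fun x => p x • rankOne (K x) (K x)) (volume.restrict X))
    (hint1 : Integrable (fun x => (multiDeriv js p x) • K x) (volume.restrict X))
    (hint2 : Integrable (fun x => p x • multiDeriv js K x) (volume.restrict X))
    (hibp : ∫ x in X, (multiDeriv js p x) • K x
        = ((-1 : ℝ) ^ js.length) • ∫ x in X, p x • multiDeriv js K x) :
    (∫ x in X, p x • rankOne (K x) (K x)) rstar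
      = ((-1 : ℝ) ^ js.length) • ∫ x in X, p x • multiDeriv js K x :=
  stmt_9_general X hX K p js rstar hrepr hCint hibp

end Stmt9
end
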